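/- Every finitely generated group that is linear over ℂ (i.e., admits a faithful representation into GL_r(ℂ) for some r) is residually finite. -/

import Mathlib

set_option maxHeartbeats 1600000
set_option synthInstance.maxHeartbeats 400000
lemma aux_jacobson_int : IsJacobsonRing ℤ := by
  rw [isJacobsonRing_iff_prime_eq]
  intro P hP
  rcases eq_or_ne P ⊥ with h | h
  · subst h
    refine le_antisymm ?_ Ideal.le_jacobson
    intro x hx
    obtain ⟨z1, hz1⟩ := Ideal.mem_jacobson_iff.mp hx 1
    obtain ⟨z2, hz2⟩ := Ideal.mem_jacobson_iff.mp hx (-1)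
    simp only [Ideal.mem_bot, mul_one] at hz1 hz2 ⊢
    have h1 : z1 * (x + 1) = 1 := by linarith
    have h2 : z2 * (1 - x) = 1 := by linarith
    have u1 := Int.isUnit_iff.mp (IsUnit.of_mul_eq_one _ (mul_comm z1 (x+1) ▸ h1))
    have u2 := Int.isUnit_iff.mp (IsUnit.of_mul_eq_one _ (mul_comm z2 (1-x) ▸ h2))
    omega
  · haveI := IsPrime.to_maximal_ideal h
    exact Ideal.jacobson_eq_self_of_isMaximal

lemma aux_finite_field (K : Type*) [Field K] (h : Module.Finite ℤ K) : Finite K := by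
  have hint : Algebra.IsIntegral ℤ K := Algebra.IsIntegral.of_finite ℤ K
  haveI : (⊥ : Ideal K).IsMaximal := Ideal.bot_isMaximal
  have hmax : (RingHom.ker (algebraMap ℤ K)).IsMaximal := by
    have : ((⊥ : Ideal K).comap (algebraMap ℤ K)).IsMaximal :=
      Ideal.isMaximal_comap_of_isIntegral_of_isMaximal (⊥ : Ideal K)
    simpa [← RingHom.ker_eq_comap_bot] using this
  have hne : RingHom.ker (algebraMap ℤ K) ≠ ⊥ := by
    intro hbot
    rw [hbot] at hmax
    obtain ⟨I, hI1, hI2⟩ := Ring.not_isField_iff_exists_ideal_bot_lt_and_lt_top.mp Int.not_isField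
    exact hI2.ne (hmax.1.2 I hI1)
  obtain ⟨n, hn, hn0⟩ := Submodule.exists_mem_ne_zero_of_ne_bot hne
  have htor : Module.IsTorsion ℤ K := by
    intro x
    refine ⟨⟨n, mem_nonZeroDivisors_of_ne_zero hn0⟩, ?_⟩
    show n • x = 0
    rw [zsmul_eq_mul]
    have : (n : K) = 0 := by simpa using hn
    rw [this, zero_mul]
  exact Module.finite_of_fg_torsion K htor

lemma aux_finite_quot (A : Type*) [CommRing A] (hA : Algebra.FiniteType ℤ A)
    (m : Ideal A) [m.IsMaximal] : Finite (A ⧸ m) := by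
  letI : Field (A ⧸ m) := Ideal.Quotient.field m
  haveI : IsJacobsonRing ℤ := aux_jacobson_int
  haveI : Algebra.FiniteType ℤ (A ⧸ m) :=
    Algebra.FiniteType.of_surjective (Ideal.Quotient.mkₐ ℤ m)
      (Ideal.Quotient.mkₐ_surjective ℤ m)
  haveI : Module.Finite ℤ (A ⧸ m) := finite_of_finite_type_of_isJacobsonRing ℤ (A ⧸ m)
  exact aux_finite_field _ this

lemma aux_main (Γ : Type*) [Group Γ] (A : Type) [CommRing A] [IsDomain A]
    [IsJacobsonRing A] (hft : Algebra.FiniteType ℤ A) (r : ℕ)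
    (ρA : Γ → Matrix (Fin r) (Fin r) A)
    (hone : ρA 1 = 1) (hmul : ∀ a b, ρA (a * b) = ρA a * ρA b)
    (hinv : ∀ γ : Γ, ρA γ * ρA γ⁻¹ = 1)
    (g : Γ) (i j : Fin r) (hbne : ρA g i j ≠ ρA 1 i j) :
    ∃ (Q : Type) (_ : Group Q) (_ : Finite Q) (f : Γ →* Q), f g ≠ 1 := by
  set b : A := ρA g i j - ρA 1 i j with hb
  have hb0 : b ≠ 0 := sub_ne_zero.mpr hbne
  -- find a maximal ideal avoiding b
  have hjac : (⊥ : Ideal A).jacobson = ⊥ := by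
    rw [← Ideal.radical_eq_jacobson]
    have h0 : nilradical A = 0 := nilradical_eq_zero A
    simpa [nilradical] using h0
  have hbnot : b ∉ (⊥ : Ideal A).jacobson := by
    rw [hjac]
    simpa using hb0
  rw [Ideal.jacobson, Ideal.mem_sInf] at hbnot
  push_neg at hbnot
  obtain ⟨m, ⟨-, hm⟩, hbm⟩ := hbnot
  haveI := hm
  haveI : Finite (A ⧸ m) := aux_finite_quot A hft m
  -- the finite quotient
  set π : Matrix (Fin r) (Fin r) A →+* Matrix (Fin r) (Fin r) (A ⧸ m) :=
    (Ideal.Quotient.mk m).mapMatrix with hπ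
  set F0 : Γ → (Matrix (Fin r) (Fin r) (A ⧸ m))ˣ := fun γ =>
    ⟨π (ρA γ), π (ρA γ⁻¹),
      by rw [← map_mul, hinv, map_one],
      by rw [← map_mul, ← hmul, inv_mul_cancel, hone, map_one]⟩ with hF0
  set F : Γ →* GL (Fin r) (A ⧸ m) :=
    { toFun := F0
      map_one' := Units.ext (by show π (ρA 1) = _; rw [hone, map_one]; rfl)
      map_mul' := fun a b => Units.ext (by
        show π (ρA (a * b)) = _
        rw [hmul, map_mul]
        rfl) } with hF
  refine ⟨GL (Fin r) (A ⧸ m), inferInstance, inferInstance, F, ?_⟩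
  intro hF1
  have hv : π (ρA g) = π (ρA 1) := by
    have h1 : π (ρA g) = (1 : Matrix (Fin r) (Fin r) (A ⧸ m)) := congrArg Units.val hF1
    rw [h1, hone, map_one]
  have hentry : (Ideal.Quotient.mk m) (ρA g i j) = (Ideal.Quotient.mk m) (ρA 1 i j) :=
    congrFun (congrFun hv i) j
  exact hbm (hb ▸ Ideal.Quotient.eq.mp hentry)

/-- Mal'cev: a finitely generated group admitting a faithful complex linear
representation is residually finite. -/
theorem stmt_6 (Γ : Type*) [Group Γ] (hfg : Group.FG Γ)
    (r : ℕ) (ρ : Γ →* GL (Fin r) ℂ) (hinj : Function.Injective ρ) :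
    ∀ g : Γ, g ≠ 1 →
      ∃ (Q : Type) (_ : Group Q) (_ : Finite Q) (f : Γ →* Q), f g ≠ 1 := by
  intro g hg
  obtain ⟨S, hScl, hSfin⟩ := Group.fg_iff.mp hfg
  -- the finitely many matrix entries of generators and their inverses
  set S' : Set Γ := S ∪ S⁻¹ with hS'
  have hS'fin : S'.Finite := hSfin.union hSfin.inv
  set T : Set ℂ :=
    (fun p : Γ × Fin r × Fin r => ((ρ p.1 : Matrix (Fin r) (Fin r) ℂ) p.2.1 p.2.2)) ''
      (S' ×ˢ Set.univ) with hT
  have hTfin : T.Finite := (hS'fin.prod Set.finite_univ).image _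
  set A : Subalgebra ℤ ℂ := Algebra.adjoin ℤ T with hA
  haveI hAft : Algebra.FiniteType ℤ A :=
    (Subalgebra.fg_iff_finiteType A).mp (Subalgebra.fg_def.mpr ⟨T, hTfin, rfl⟩)
  haveI : IsJacobsonRing ℤ := aux_jacobson_int
  haveI hAjac : IsJacobsonRing A := isJacobsonRing_of_finiteType (A := ℤ)
  -- all entries of the representation lie in A
  have hmem : ∀ γ : Γ, (∀ i j, (ρ γ : Matrix (Fin r) (Fin r) ℂ) i j ∈ A) ∧
      (∀ i j, (((ρ γ)⁻¹ : GL (Fin r) ℂ) : Matrix (Fin r) (Fin r) ℂ) i j ∈ A) := by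
    have key : ∀ γ ∈ Subgroup.closure S',
        (∀ i j, (ρ γ : Matrix (Fin r) (Fin r) ℂ) i j ∈ A) ∧
        (∀ i j, (((ρ γ)⁻¹ : GL (Fin r) ℂ) : Matrix (Fin r) (Fin r) ℂ) i j ∈ A) := by
      intro γ hγ
      induction hγ using Subgroup.closure_induction with
      | mem s hs =>
        constructor
        · intro i j
          exact Algebra.subset_adjoin ⟨⟨s, i, j⟩, ⟨hs, Set.mem_univ _⟩, rfl⟩
        · intro i j
          have : ((ρ s)⁻¹ : GL (Fin r) ℂ) = ρ s⁻¹ := (map_inv ρ s).symm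
          rw [this]
          refine Algebra.subset_adjoin ⟨⟨s⁻¹, i, j⟩, ⟨?_, Set.mem_univ _⟩, rfl⟩
          rcases hs with h | h
          · exact Or.inr (Set.inv_mem_inv.mpr h)
          · exact Or.inl (by simpa using h)
      | one =>
        constructor <;>
        · intro i j
          simp only [map_one, inv_one, Units.val_one, Matrix.one_apply]
          split <;> [exact A.one_mem; exact A.zero_mem]
      | mul a b _ _ ha hb =>
        constructor
        · intro i j
          rw [map_mul]
          simp only [Units.val_mul, Matrix.mul_apply]
          exact A.toSubring.sum_mem fun k _ => A.mul_mem (ha.1 i k) (hb.1 k j)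
        · intro i j
          rw [map_mul, mul_inv_rev]
          simp only [Units.val_mul, Matrix.mul_apply]
          exact A.toSubring.sum_mem fun k _ => A.mul_mem (hb.2 i k) (ha.2 k j)
      | inv a _ ha =>
        exact ⟨fun i j => by rw [map_inv]; exact ha.2 i j,
               fun i j => by rw [map_inv, inv_inv]; exact ha.1 i j⟩
    intro γ
    have : γ ∈ Subgroup.closure S' := by
      have : Subgroup.closure S ≤ Subgroup.closure S' :=
        Subgroup.closure_mono Set.subset_union_left
      rw [hScl] at this
      exact this (Subgroup.mem_top γ)
    exact key γ this
  clear hT hS' hScl hSfin hS'fin hTfin hA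
  clear_value A T S'
  clear T S'
  -- integral matrix model
  set ρA : Γ → Matrix (Fin r) (Fin r) A := fun γ i j =>
    ⟨(ρ γ : Matrix (Fin r) (Fin r) ℂ) i j, (hmem γ).1 i j⟩ with hρA
  set e : Matrix (Fin r) (Fin r) A →+* Matrix (Fin r) (Fin r) ℂ :=
    (A.toSubring.subtype).mapMatrix with he
  have heinj : Function.Injective e := fun M N h => by
    ext i j
    have h2 : (e M) i j = (e N) i j := by rw [h]
    exact h2
  have heρ : ∀ γ, e (ρA γ) = (ρ γ : Matrix (Fin r) (Fin r) ℂ) := fun γ => rfl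
  have hone : ρA 1 = 1 := heinj (by rw [heρ]; simp)
  have hmul : ∀ a b, ρA (a * b) = ρA a * ρA b := fun a b => heinj (by
    rw [map_mul, heρ, heρ, heρ, map_mul, Units.val_mul])
  have hinv : ∀ γ, ρA γ * ρA γ⁻¹ = 1 := fun γ => by
    rw [← hmul, mul_inv_cancel, hone]
  -- pick a nonzero entry witnessing g ≠ 1
  have hne : (ρ g : Matrix (Fin r) (Fin r) ℂ) ≠ 1 := by
    intro h
    have h1 : ρ g = 1 := Units.ext (by simpa using h)
    exact hg (hinj (by rw [h1, map_one]))
  obtain ⟨i, j, hij⟩ : ∃ i j, (ρ g : Matrix (Fin r) (Fin r) ℂ) i j ≠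
      (1 : Matrix (Fin r) (Fin r) ℂ) i j := by
    by_contra h
    push_neg at h
    exact hne (by ext i j; exact h i j)
  have hbne : ρA g i j ≠ ρA 1 i j := by
    intro h0
    apply hij
    have h1 : (ρA g i j : ℂ) = (ρA 1 i j : ℂ) := congrArg Subtype.val h0
    have h2 : (ρA 1 i j : ℂ) = (1 : Matrix (Fin r) (Fin r) ℂ) i j := by
      simp [hρA]
    rw [← h1] at h2
    exact h2
  exact aux_main Γ A inferInstance r ρA hone hmul hinv g i j hbne
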